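/- Let n ≥ 1, let e, e_f, σ ∈ ℝⁿ, let G, Ω be real symmetric positive definite n×n matrices, let ϖ > 0 with ‖e_f‖ < ϖ, let ρ̂ ≥ 0, let ϑ ≥ 0 with ‖σ‖‖e_f‖ ≤ ϖ ϑ, let z satisfy 0 < z < λ_min(G), let ϱ_M > 0, ζ ≥ 0, V₁ ∈ ℝ satisfy V₁ ≤ ϱ_M(‖e_f‖² + ‖e‖²) + ζ, and set ϱ₁ = min{ λ_min(G) − z, λ_min(Ω) } / ϱ_M. Then −e_fᵀ G e_f − eᵀ Ω e + e_fᵀ( −ρ̂ e_f/ϖ + σ ) ≤ −ϱ₁ V₁ − z ‖e_f‖² + ϱ₁ ζ + ϖ ϑ. -/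

import Mathlib

noncomputable def matVec {n : ℕ} (A : Matrix (Fin n) (Fin n) ℝ)
    (x : EuclideanSpace ℝ (Fin n)) : EuclideanSpace ℝ (Fin n) :=
  Matrix.toEuclideanCLM (𝕜 := ℝ) A x

/-- Real inner product `xᵀ y` on Euclidean space. -/
noncomputable def dotE {n : ℕ} (x y : EuclideanSpace ℝ (Fin n)) : ℝ := inner ℝ x y

/-- Minimum eigenvalue of a Hermitian (real symmetric) matrix. -/
noncomputable def lamMin {n : ℕ} (A : Matrix (Fin n) (Fin n) ℝ) (hA : A.IsHermitian) : ℝ :=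
  ⨅ i, hA.eigenvalues i

/-!
The quadratic terms are bounded by the Rayleigh inequality `xᵀ A x ≥ λ_min(A) ‖x‖²`, which follows
from expanding `x` in an orthonormal eigenbasis of `A`. In the robust term, `-ρ̂ ‖e_f‖² / ϖ ≤ 0` and
`e_fᵀ σ ≤ ‖e_f‖ ‖σ‖ ≤ ϖ ϑ`. Finally `ϱ₁ ϱ_M = min (λ_min(G) - z) (λ_min(Ω)) ≥ 0`, so the bound on `V₁`
gives `ϱ₁ (V₁ - ζ) ≤ (λ_min(G) - z) ‖e_f‖² + λ_min(Ω) ‖e‖²`.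
-/

open scoped RealInnerProductSpace

section Rayleigh

variable {n : ℕ} {A : Matrix (Fin n) (Fin n) ℝ}

theorem inner_matVec_left (hA : A.IsHermitian) (x y : EuclideanSpace ℝ (Fin n)) :
    ⟪matVec A x, y⟫ = ⟪x, matVec A y⟫ :=
  Matrix.isSymmetric_toEuclideanLin_iff.mpr hA x y

theorem matVec_eigenvectorBasis (hA : A.IsHermitian) (i : Fin n) :
    matVec A (hA.eigenvectorBasis i) = hA.eigenvalues i • hA.eigenvectorBasis i := by
  ext j
  simpa [matVec, Matrix.ofLp_toEuclideanCLM] using congrFun (hA.mulVec_eigenvectorBasis i) j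

theorem dotE_matVec_self_eq_sum (hA : A.IsHermitian) (x : EuclideanSpace ℝ (Fin n)) :
    dotE x (matVec A x) = ∑ i, hA.eigenvalues i * ⟪hA.eigenvectorBasis i, x⟫ ^ 2 := by
  rw [dotE, ← hA.eigenvectorBasis.sum_inner_mul_inner]
  refine Finset.sum_congr rfl fun i _ => ?_
  rw [← inner_matVec_left hA, matVec_eigenvectorBasis, real_inner_smul_left, real_inner_comm x]
  ring

theorem lamMin_le_eigenvalues (hA : A.IsHermitian) (i : Fin n) : lamMin A hA ≤ hA.eigenvalues i :=
  ciInf_le (Finite.bddBelow_range _) i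

theorem lamMin_mul_norm_sq_le_dotE_matVec (hA : A.IsHermitian) (x : EuclideanSpace ℝ (Fin n)) :
    lamMin A hA * ‖x‖ ^ 2 ≤ dotE x (matVec A x) := by
  rw [dotE_matVec_self_eq_sum hA, ← hA.eigenvectorBasis.sum_sq_inner_right, Finset.mul_sum]
  exact Finset.sum_le_sum fun i _ =>
    mul_le_mul_of_nonneg_right (lamMin_le_eigenvalues hA i) (sq_nonneg _)

theorem lamMin_nonneg (hA : A.PosSemidef) : 0 ≤ lamMin A hA.isHermitian :=
  Real.iInf_nonneg hA.eigenvalues_nonneg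

end Rayleigh

theorem inner_neg_smul_add_le {E : Type*} [NormedAddCommGroup E] [InnerProductSpace ℝ E]
    {c : ℝ} (hc : 0 ≤ c) (x y : E) : ⟪x, -(c • x) + y⟫ ≤ ‖x‖ * ‖y‖ := by
  rw [inner_add_right, inner_neg_right, real_inner_smul_right, real_inner_self_eq_norm_sq]
  nlinarith [real_inner_le_norm x y, sq_nonneg ‖x‖]

theorem case3_boundary_layer_bound_general {n : ℕ}
    (e ef σ : EuclideanSpace ℝ (Fin n))
    (G Ω : Matrix (Fin n) (Fin n) ℝ) (hG : G.PosDef) (hΩ : Ω.PosDef)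
    (ϖ : ℝ) (hϖ : 0 < ϖ)
    (ρ : ℝ) (hρ : 0 ≤ ρ)
    (ϑ : ℝ) (hσϑ : ‖σ‖ * ‖ef‖ ≤ ϖ * ϑ)
    (z : ℝ) (hz : z < lamMin G hG.isHermitian)
    (ϱM ζ V1 : ℝ) (hϱM : 0 < ϱM)
    (hV1 : V1 ≤ ϱM * (‖ef‖ ^ 2 + ‖e‖ ^ 2) + ζ)
    (ϱ1 : ℝ)
    (hϱ1 : ϱ1 = min (lamMin G hG.isHermitian - z) (lamMin Ω hΩ.isHermitian) / ϱM) :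
    -dotE ef (matVec G ef) - dotE e (matVec Ω e)
      + dotE ef (-((ρ / ϖ) • ef) + σ) ≤
      -ϱ1 * V1 - z * ‖ef‖ ^ 2 + ϱ1 * ζ + ϖ * ϑ := by
  set m := min (lamMin G hG.isHermitian - z) (lamMin Ω hΩ.isHermitian)
  have hGef := lamMin_mul_norm_sq_le_dotE_matVec hG.isHermitian ef
  have hΩe := lamMin_mul_norm_sq_le_dotE_matVec hΩ.isHermitian e
  have hrobust : dotE ef (-((ρ / ϖ) • ef) + σ) ≤ ϖ * ϑ :=
    (inner_neg_smul_add_le (div_nonneg hρ hϖ.le) ef σ).trans (by linarith)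
  have hϱ1_nonneg : 0 ≤ ϱ1 :=
    hϱ1 ▸ div_nonneg (le_min (by linarith) (lamMin_nonneg hΩ.posSemidef)) hϱM.le
  have hdecay : ϱ1 * (V1 - ζ) ≤
      (lamMin G hG.isHermitian - z) * ‖ef‖ ^ 2 + lamMin Ω hΩ.isHermitian * ‖e‖ ^ 2 :=
    calc ϱ1 * (V1 - ζ) ≤ ϱ1 * (ϱM * (‖ef‖ ^ 2 + ‖e‖ ^ 2)) :=
          mul_le_mul_of_nonneg_left (by linarith) hϱ1_nonneg
      _ = m * ‖ef‖ ^ 2 + m * ‖e‖ ^ 2 := by rw [hϱ1]; field_simp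
      _ ≤ _ := add_le_add (mul_le_mul_of_nonneg_right (min_le_left _ _) (sq_nonneg _))
          (mul_le_mul_of_nonneg_right (min_le_right _ _) (sq_nonneg _))
  linarith

theorem case3_boundary_layer_bound {n : ℕ} (hn : 1 ≤ n)
    (e ef σ : EuclideanSpace ℝ (Fin n))
    (G Ω : Matrix (Fin n) (Fin n) ℝ) (hG : G.PosDef) (hΩ : Ω.PosDef)
    (ϖ : ℝ) (hϖ : 0 < ϖ) (hefϖ : ‖ef‖ < ϖ)
    (ρ : ℝ) (hρ : 0 ≤ ρ)
    (ϑ : ℝ) (hϑ : 0 ≤ ϑ) (hσϑ : ‖σ‖ * ‖ef‖ ≤ ϖ * ϑ)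
    (z : ℝ) (hz0 : 0 < z) (hz : z < lamMin G hG.isHermitian)
    (ϱM ζ V1 : ℝ) (hϱM : 0 < ϱM) (hζ : 0 ≤ ζ)
    (hV1 : V1 ≤ ϱM * (‖ef‖ ^ 2 + ‖e‖ ^ 2) + ζ)
    (ϱ1 : ℝ)
    (hϱ1 : ϱ1 = min (lamMin G hG.isHermitian - z) (lamMin Ω hΩ.isHermitian) / ϱM) :
    -dotE ef (matVec G ef) - dotE e (matVec Ω e)
      + dotE ef (-((ρ / ϖ) • ef) + σ) ≤
      -ϱ1 * V1 - z * ‖ef‖ ^ 2 + ϱ1 * ζ + ϖ * ϑ :=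
  case3_boundary_layer_bound_general e ef σ G Ω hG hΩ ϖ hϖ ρ hρ ϑ hσϑ z hz ϱM ζ V1 hϱM hV1 ϱ1 hϱ1
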